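/- arXiv:1012.0502 — 6 statements merged into one kernel-verified Lean document; each statement's English description precedes it below -/
import Mathlib

section
/- The Arf invariant is well-defined: if a quadratic form q in two variables over a field K of characteristic 2 is described by q(v) = v'Mv for matrices M and M̃ (so M - M̃ = t·i for some t ∈ K, where i is the standard alternating 2×2 matrix), then det(M)/(tr(iM))² and det(M̃)/(tr(iM̃))² differ by an element of ℘ := {x + x² : x ∈ K}. -/
/-!
In characteristic 2 all matrices of `q` share the diagonal `a, c` and the off-diagonal sum
`b = M 0 1 + M 1 0 = tr(iM)`; only the split `s = M 0 1` varies. Since `det M = a c + s b + s²`,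
we get `det M / b² = a c / b² + u + u²` with `u = s / b`, and changing `s` changes `u + u²` by an
element of `℘` because `x ↦ x + x²` is additive.
-/

open Matrix

theorem Matrix.dotProduct_mulVec_self_fin_two {R : Type*} [CommRing R]
    (M : Matrix (Fin 2) (Fin 2) R) (v : Fin 2 → R) :
    v ⬝ᵥ M *ᵥ v = M 0 0 * v 0 ^ 2 + (M 0 1 + M 1 0) * (v 0 * v 1) + M 1 1 * v 1 ^ 2 := by
  simp only [dotProduct, mulVec, Fin.sum_univ_two]
  ring

theorem Matrix.coeffs_eq_of_dotProduct_mulVec_self_eq {R : Type*} [CommRing R]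
    {M M' : Matrix (Fin 2) (Fin 2) R} (h : ∀ v, v ⬝ᵥ M *ᵥ v = v ⬝ᵥ M' *ᵥ v) :
    M 0 0 = M' 0 0 ∧ M 1 1 = M' 1 1 ∧ M 0 1 + M 1 0 = M' 0 1 + M' 1 0 := by
  have h00 := h ![1, 0]
  have h11 := h ![0, 1]
  have h01 := h ![1, 1]
  simp only [dotProduct_mulVec_self_fin_two, cons_val_zero, cons_val_one, cons_val_fin_one]
    at h00 h11 h01
  norm_num at h00 h11 h01
  exact ⟨h00, h11, by linear_combination h01 - h00 - h11⟩

theorem Matrix.trace_alternating_mul_fin_two {R : Type*} [CommRing R]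
    (M : Matrix (Fin 2) (Fin 2) R) :
    (!![(0 : R), 1; -1, 0] * M).trace = M 1 0 - M 0 1 := by
  rw [trace_fin_two, mul_apply, mul_apply]
  simp [Fin.sum_univ_two, sub_eq_add_neg]

theorem CharTwo.add_sq_sub_add_sq {R : Type*} [CommRing R] [CharP R 2] (x y : R) :
    x + x ^ 2 - (y + y ^ 2) = (x - y) + (x - y) ^ 2 := by
  rw [sub_pow_char]
  ring

theorem CharTwo.trace_alternating_mul_fin_two {R : Type*} [CommRing R] [CharP R 2]
    (M : Matrix (Fin 2) (Fin 2) R) :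
    (!![(0 : R), 1; -1, 0] * M).trace = M 0 1 + M 1 0 := by
  rw [Matrix.trace_alternating_mul_fin_two, CharTwo.sub_eq_add, add_comm]

theorem CharTwo.det_div_trace_alternating_mul_sq {K : Type*} [Field K] [CharP K 2]
    (M : Matrix (Fin 2) (Fin 2) K) (hb : M 0 1 + M 1 0 ≠ 0) :
    M.det / (!![(0 : K), 1; -1, 0] * M).trace ^ 2 =
      M 0 0 * M 1 1 / (M 0 1 + M 1 0) ^ 2 +
        (M 0 1 / (M 0 1 + M 1 0) + (M 0 1 / (M 0 1 + M 1 0)) ^ 2) := by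
  rw [CharTwo.trace_alternating_mul_fin_two, det_fin_two]
  field_simp
  linear_combination (-(M 0 1 * M 1 0) - M 0 1 ^ 2) * CharTwo.two_eq_zero (R := K)

theorem arf_well_defined_general {K : Type*} [Field K] [CharP K 2]
    (M M' : Matrix (Fin 2) (Fin 2) K)
    (hsame : ∀ v : Fin 2 → K, v ⬝ᵥ M.mulVec v = v ⬝ᵥ M'.mulVec v)
    (hM : (!![(0 : K), 1; -1, 0] * M).trace ≠ 0) :
    ∃ t : K,
      M.det / ((!![(0 : K), 1; -1, 0] * M).trace) ^ 2
        - M'.det / ((!![(0 : K), 1; -1, 0] * M').trace) ^ 2 = t + t ^ 2 := by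
  obtain ⟨h00, h11, hb⟩ := coeffs_eq_of_dotProduct_mulVec_self_eq hsame
  have hb0 : M 0 1 + M 1 0 ≠ 0 := CharTwo.trace_alternating_mul_fin_two M ▸ hM
  rw [CharTwo.det_div_trace_alternating_mul_sq M hb0,
    CharTwo.det_div_trace_alternating_mul_sq M' (hb ▸ hb0), h00, h11, hb, add_sub_add_left_eq_sub]
  exact ⟨_, CharTwo.add_sq_sub_add_sq _ _⟩

/-- Well-definedness of the Arf invariant in characteristic 2. -/
theorem arf_well_defined {K : Type*} [Field K] [CharP K 2]
    (M M' : Matrix (Fin 2) (Fin 2) K)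
    (hsame : ∀ v : Fin 2 → K, v ⬝ᵥ M.mulVec v = v ⬝ᵥ M'.mulVec v)
    (hM : (!![(0 : K), 1; -1, 0] * M).trace ≠ 0)
    (hM' : (!![(0 : K), 1; -1, 0] * M').trace ≠ 0) :
    ∃ t : K,
      M.det / ((!![(0 : K), 1; -1, 0] * M).trace) ^ 2
        - M'.det / ((!![(0 : K), 1; -1, 0] * M').trace) ^ 2 = t + t ^ 2 :=
  arf_well_defined_general M M' hsame hM
end

section
/- Let H be a quaternion division algebra over K with norm N and trace tr. For v, x ∈ H, there exist a, b ∈ H^× with a v ã N(b) = x if and only if there exists z ∈ H^× such that N(x) = N(v)N(z)² and tr(x) = tr(v)N(z). -/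
/-!
Read as `K`-valued functions, the reduced norm `N` and trace `T` turn both sides into
equations in `K`. For `x = N(b) · a v ã` multiplicativity of `N` gives `N(x) = N(v) N(ab)²`
and `T(x) = T(v) N(ab)`. Conversely, if `m = N(z)` then `y = m⁻¹ x` has the norm and trace
of `v`, so `v` and `y` are roots of the same quadratic `X² - T(v) X + N(v)`; this makes them
conjugate, `v a = a y`, and `x = ã v a · N(a⁻¹ z)`.
-/

section Intertwiner

variable {K A : Type*} [CommRing K] [Ring A] [Algebra K A]

theorem mul_intertwiner_eq_intertwiner_mul {t n : K} {v y : A}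
    (hv : v * v = algebraMap K A t * v - algebraMap K A n)
    (hy : y * y = algebraMap K A t * y - algebraMap K A n) (u : A) :
    v * (v * u - u * (algebraMap K A t - y)) = (v * u - u * (algebraMap K A t - y)) * y := by
  rw [← sub_eq_zero]
  calc _ = (v * v - (algebraMap K A t * v - algebraMap K A n)) * u
          - u * (y * y - (algebraMap K A t * y - algebraMap K A n))
          + (algebraMap K A t * (v * u) - v * u * algebraMap K A t)
          + (u * algebraMap K A n - algebraMap K A n * u) := by noncomm_ring
    _ = 0 := by simp [hv, hy, Algebra.commutes]

end Intertwiner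

section NormTrace

variable {K H : Type*} [Field K] [DivisionRing H] [Algebra K H] [StarRing H] {N T : H → K}

theorem star_eq_algebraMap_reducedTrace_sub (hT : ∀ u : H, star u + u = algebraMap K H (T u))
    (u : H) : star u = algebraMap K H (T u) - u :=
  eq_sub_of_add_eq (hT u)

theorem mul_self_eq_reducedTrace_mul_sub_reducedNorm
    (hN : ∀ u : H, star u * u = algebraMap K H (N u))
    (hT : ∀ u : H, star u + u = algebraMap K H (T u)) (v : H) :
    v * v = algebraMap K H (T v) * v - algebraMap K H (N v) := by
  have h := hN v
  rw [star_eq_algebraMap_reducedTrace_sub hT, sub_mul] at h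
  rw [← h, sub_sub_cancel]

/-- `star k = T k - k` is a scalar `s`; if `s ≠ k`, the trace of `k u`, namely
`(T u - u) s + k u`, puts `(k - s) u` in `K` for every `u`. -/
theorem star_algebraMap_of_reducedTrace (hT : ∀ u : H, star u + u = algebraMap K H (T u))
    (hbot : (⊥ : Subalgebra K H) ≠ ⊤) (k : K) :
    star (algebraMap K H k) = algebraMap K H k := by
  obtain ⟨s, hc⟩ : ∃ s, star (algebraMap K H k) = algebraMap K H s :=
    ⟨T (algebraMap K H k) - k, by rw [star_eq_algebraMap_reducedTrace_sub hT, map_sub]⟩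
  rw [hc]
  by_contra hne
  have hks : k - s ≠ 0 := sub_ne_zero.mpr fun h => hne (congrArg _ h.symm)
  refine hbot (eq_top_iff.mpr fun u _ => Algebra.mem_bot.mpr ?_)
  obtain ⟨m, hcu⟩ :
      ∃ m, star (algebraMap K H k * u) + algebraMap K H k * u = algebraMap K H m := ⟨_, hT _⟩
  rw [star_mul, hc, star_eq_algebraMap_reducedTrace_sub hT u] at hcu
  simp only [Algebra.algebraMap_eq_smul_one, smul_mul_assoc, mul_smul_comm, one_mul,
    mul_one] at hcu
  refine ⟨(k - s)⁻¹ * (m - T u * s), ?_⟩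
  have hu : (k - s) • u = (m - T u * s) • (1 : H) := by
    linear_combination (norm := module) hcu
  rw [Algebra.algebraMap_eq_smul_one, mul_smul, ← hu, smul_smul, inv_mul_cancel₀ hks, one_smul]

theorem mul_star_self_eq_algebraMap_reducedNorm (hN : ∀ u : H, star u * u = algebraMap K H (N u))
    (a : H) : a * star a = algebraMap K H (N a) := by
  rcases eq_or_ne a 0 with rfl | ha
  · rw [← hN, star_zero]
  · refine mul_right_cancel₀ ha ?_
    rw [mul_assoc, hN, Algebra.commutes]

theorem reducedNorm_mul (hN : ∀ u : H, star u * u = algebraMap K H (N u)) (a b : H) :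
    N (a * b) = N a * N b := by
  apply (algebraMap K H).injective
  rw [← hN, star_mul, mul_assoc, ← mul_assoc (star a), hN, ← mul_assoc, ← Algebra.commutes,
    mul_assoc, hN, map_mul]

theorem reducedNorm_star (hN : ∀ u : H, star u * u = algebraMap K H (N u)) (a : H) :
    N (star a) = N a := by
  apply (algebraMap K H).injective
  rw [← hN, star_star, mul_star_self_eq_algebraMap_reducedNorm hN]

theorem reducedNorm_ne_zero (hN : ∀ u : H, star u * u = algebraMap K H (N u)) {a : H}
    (ha : a ≠ 0) : N a ≠ 0 := by
  intro h
  apply mul_ne_zero (star_ne_zero.mpr ha) ha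
  rw [hN, h, map_zero]

theorem reducedNorm_inv (hN : ∀ u : H, star u * u = algebraMap K H (N u)) (a : H) :
    N a⁻¹ = (N a)⁻¹ := by
  rcases eq_or_ne a 0 with rfl | ha
  · have h0 : N 0 = 0 := (algebraMap K H).injective (by rw [← hN, mul_zero, map_zero])
    rw [inv_zero, h0, inv_zero]
  · refine eq_inv_of_mul_eq_one_right ((algebraMap K H).injective ?_)
    rw [← reducedNorm_mul hN, mul_inv_cancel₀ ha, ← hN, star_one, mul_one, map_one]

theorem reducedNorm_algebraMap (hN : ∀ u : H, star u * u = algebraMap K H (N u))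
    (hstar : ∀ k : K, star (algebraMap K H k) = algebraMap K H k) (k : K) :
    N (algebraMap K H k) = k ^ 2 := by
  apply (algebraMap K H).injective
  rw [← hN, hstar, ← map_mul, sq]

theorem reducedNorm_twist (hN : ∀ u : H, star u * u = algebraMap K H (N u))
    (hstar : ∀ k : K, star (algebraMap K H k) = algebraMap K H k) (a v : H) (β : K) :
    N (a * v * star a * algebraMap K H β) = N v * (N a * β) ^ 2 := by
  rw [reducedNorm_mul hN, reducedNorm_mul hN, reducedNorm_mul hN, reducedNorm_star hN,
    reducedNorm_algebraMap hN hstar]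
  ring

theorem reducedTrace_conj (hN : ∀ u : H, star u * u = algebraMap K H (N u))
    (hT : ∀ u : H, star u + u = algebraMap K H (T u)) (a v : H) :
    T (a * v * star a) = N a * T v := by
  apply (algebraMap K H).injective
  rw [← hT, star_mul, star_mul, star_star, ← mul_assoc, ← add_mul, ← mul_add, hT,
    ← Algebra.commutes, mul_assoc, mul_star_self_eq_algebraMap_reducedNorm hN, ← map_mul,
    mul_comm]

theorem reducedTrace_mul_algebraMap (hT : ∀ u : H, star u + u = algebraMap K H (T u))
    (hstar : ∀ k : K, star (algebraMap K H k) = algebraMap K H k) (w : H) (c : K) :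
    T (w * algebraMap K H c) = T w * c := by
  apply (algebraMap K H).injective
  rw [← hT, star_mul, hstar, ← Algebra.commutes c w, ← mul_add, hT, ← map_mul, mul_comm]

theorem reducedTrace_twist (hN : ∀ u : H, star u * u = algebraMap K H (N u))
    (hT : ∀ u : H, star u + u = algebraMap K H (T u))
    (hstar : ∀ k : K, star (algebraMap K H k) = algebraMap K H k) (a v : H) (β : K) :
    T (a * v * star a * algebraMap K H β) = T v * (N a * β) := by
  rw [reducedTrace_mul_algebraMap hT hstar, reducedTrace_conj hN hT]
  ring

theorem exists_ne_zero_mul_eq_mul_of_reducedNorm_of_reducedTrace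
    (hN : ∀ u : H, star u * u = algebraMap K H (N u))
    (hT : ∀ u : H, star u + u = algebraMap K H (T u))
    (hstar : ∀ k : K, star (algebraMap K H k) = algebraMap K H k)
    (hcent : Subalgebra.center K H = ⊥) {v y : H} (hn : N y = N v) (ht : T y = T v) :
    ∃ a : H, a ≠ 0 ∧ v * a = a * y := by
  by_cases hall : ∀ u : H, v * u = u * star y
  · -- then `v = star y` is central, hence a scalar fixed by `star`
    have hvy : v = star y := by simpa using hall 1
    obtain ⟨k, hk⟩ : v ∈ Set.range (algebraMap K H) := by
      rw [← Algebra.mem_bot, ← hcent, Subalgebra.mem_center_iff]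
      exact fun w => by rw [hall, ← hvy]
    refine ⟨1, one_ne_zero, ?_⟩
    rw [mul_one, one_mul, ← star_star y, ← hvy, ← hk, hstar]
  · push Not at hall
    obtain ⟨u, hu⟩ := hall
    have hquad := mul_self_eq_reducedTrace_mul_sub_reducedNorm hN hT
    refine ⟨v * u - u * star y, sub_ne_zero.mpr hu, ?_⟩
    rw [star_eq_algebraMap_reducedTrace_sub hT, ht]
    exact mul_intertwiner_eq_intertwiner_mul (hquad v) (by rw [hquad, hn, ht]) u

/-- `x = ã v a · N(a⁻¹ z)` for `a` conjugating `v` to `N(z)⁻¹ x`. -/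
theorem exists_twist_eq_of_reducedNorm_of_reducedTrace
    (hN : ∀ u : H, star u * u = algebraMap K H (N u))
    (hT : ∀ u : H, star u + u = algebraMap K H (T u))
    (hstar : ∀ k : K, star (algebraMap K H k) = algebraMap K H k)
    (hcent : Subalgebra.center K H = ⊥) {v x z : H} (hz : z ≠ 0)
    (hn : N x = N v * N z ^ 2) (ht : T x = T v * N z) :
    ∃ a b : H, a ≠ 0 ∧ b ≠ 0 ∧ a * v * star a * algebraMap K H (N b) = x := by
  have hm := reducedNorm_ne_zero hN hz
  set y := x * algebraMap K H (N z)⁻¹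
  have hy : x = y * algebraMap K H (N z) := by
    rw [mul_assoc, ← map_mul, inv_mul_cancel₀ hm, map_one, mul_one]
  have hNy : N y = N v := by
    rw [reducedNorm_mul hN, reducedNorm_algebraMap hN hstar, hn]
    field_simp
  have hTy : T y = T v := by
    rw [reducedTrace_mul_algebraMap hT hstar, ht]
    field_simp
  obtain ⟨a, ha, hva⟩ :=
    exists_ne_zero_mul_eq_mul_of_reducedNorm_of_reducedTrace hN hT hstar hcent hNy hTy
  refine ⟨star a, a⁻¹ * z, star_ne_zero.mpr ha, mul_ne_zero (inv_ne_zero ha) hz, ?_⟩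
  rw [star_star, mul_assoc (star a), hva, ← mul_assoc, hN, reducedNorm_mul hN,
    reducedNorm_inv hN, hy, Algebra.commutes, mul_assoc, ← map_mul, mul_inv_cancel_left₀
    (reducedNorm_ne_zero hN ha)]

end NormTrace

/-- In a quaternion division algebra, x lies in the orbit of v under the maps
u ↦ a u ã N(b) iff there is z with N(x) = N(v)N(z)² and tr(x) = tr(v)N(z). -/
theorem quaternion_twisted_orbit_iff {K H : Type*} [Field K] [DivisionRing H]
    [Algebra K H] [StarRing H]
    (hcent : Subalgebra.center K H = ⊥)
    (hdim : Module.finrank K H = 4)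
    (htr : ∀ u : H, ∃ t : K, star u + u = algebraMap K H t)
    (hnorm : ∀ u : H, ∃ n : K, star u * u = algebraMap K H n)
    (v x : H) :
    (∃ a b : H, a ≠ 0 ∧ b ≠ 0 ∧ a * v * star a * (star b * b) = x) ↔
      (∃ z : H, z ≠ 0 ∧ star x * x = star v * v * (star z * z) ^ 2 ∧
        star x + x = (star v + v) * (star z * z)) := by
  choose N hN using hnorm
  choose T hT using htr
  have hbot : (⊥ : Subalgebra K H) ≠ ⊤ := fun h => by
    have := Subalgebra.bot_eq_top_iff_finrank_eq_one.mp h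
    omega
  have hstar := star_algebraMap_of_reducedTrace hT hbot
  simp only [hN, hT, ← map_pow, ← map_mul, (algebraMap K H).injective.eq_iff]
  constructor
  · rintro ⟨a, b, ha, hb, rfl⟩
    exact ⟨a * b, mul_ne_zero ha hb, by rw [reducedNorm_twist hN hstar, reducedNorm_mul hN],
      by rw [reducedTrace_twist hN hT hstar, reducedNorm_mul hN]⟩
  · rintro ⟨z, hz, hn, ht⟩
    exact exists_twist_eq_of_reducedNorm_of_reducedTrace hN hT hstar hcent hz hn ht
end

section
/- Let q : V → K be a diagonalizable non-degenerate quadratic form over a field of characteristic 2 with dim_K V odd and finite. Then the similitude group GO(q) equals K^×·id, and every multiplier is a square. -/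
/-! A quadratic form with vanishing polar form is additive, so in characteristic 2
`q u = q w` gives `q (u + w) = 0`; if `q` is anisotropic this forces `u = -w = w`, so `q`
is injective. A similitude `φ` with multiplier `r` then satisfies
`q (φ (φ v)) = r ^ 2 * q v = q (r • v)`, hence `φ ∘ φ = r • id`. Taking determinants,
`r ^ (dim V)` is a square, and as `dim V` is odd so is `r = c ^ 2`. Finally
`q (φ v) = c ^ 2 * q v = q (c • v)` gives `φ v = c • v`. -/

theorem isSquare_of_isSquare_pow_of_odd {K : Type*} [Field K] {r : K} {n : ℕ} (hn : Odd n)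
    (hsq : IsSquare (r ^ n)) : IsSquare r := by
  rcases eq_or_ne r 0 with rfl | hr
  · exact IsSquare.zero
  obtain ⟨k, rfl⟩ := hn
  obtain ⟨s, hs⟩ := hsq
  refine ⟨s / r ^ k, ?_⟩
  field_simp
  linear_combination hs

theorem LinearMap.isSquare_of_comp_self_eq_smul_id {K V : Type*} [Field K] [AddCommGroup V]
    [Module K V] (hodd : Odd (Module.finrank K V)) {f : V →ₗ[K] V}
    {r : K} (hf : f ∘ₗ f = r • LinearMap.id) : IsSquare r := by
  refine isSquare_of_isSquare_pow_of_odd hodd ⟨LinearMap.det f, ?_⟩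
  rw [← LinearMap.det_comp, hf, LinearMap.det_smul, LinearMap.det_id, mul_one]

namespace QuadraticMap

variable {R M : Type*} [CommRing R] [AddCommGroup M] [Module R M] {q : QuadraticForm R M}

theorem injective_of_polar_eq_zero [CharP R 2] (hpolar : ∀ x y, polar q x y = 0)
    (haniso : q.Anisotropic) : Function.Injective q := by
  intro u w h
  have hsum : u + w = 0 :=
    haniso _ (by rw [isOrtho_polarBilin.mp (hpolar u w), h, CharTwo.add_self_eq_zero])
  calc u = -w := eq_neg_of_add_eq_zero_left hsum
    _ = (-1 : R) • w := (neg_one_smul R w).symm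
    _ = w := by rw [CharTwo.neg_eq, one_smul]

end QuadraticMap

theorem similitudes_odd_dim_char_two_general {K V : Type*} [Field K] [CharP K 2]
    [AddCommGroup V] [Module K V]
    (hodd : Odd (Module.finrank K V))
    (q : QuadraticForm K V)
    (hdiag : ∀ x y : V, QuadraticMap.polar q x y = 0)
    (haniso : QuadraticMap.Anisotropic q)
    (φ : V ≃ₗ[K] V) (r : K) (hr : r ≠ 0)
    (hsim : ∀ v, q (φ v) = r * q v) :
    ∃ c : K, c ≠ 0 ∧ r = c ^ 2 ∧ ∀ v, φ v = c • v := by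
  have hinj := QuadraticMap.injective_of_polar_eq_zero hdiag haniso
  have hφφ : (φ : V →ₗ[K] V) ∘ₗ φ = r • LinearMap.id := by
    ext v
    apply hinj
    simp only [LinearMap.comp_apply, LinearEquiv.coe_coe, LinearMap.smul_apply,
      LinearMap.id_apply, hsim, QuadraticMap.map_smul, smul_eq_mul]
    ring
  obtain ⟨c, hc⟩ := LinearMap.isSquare_of_comp_self_eq_smul_id hodd hφφ
  refine ⟨c, fun h => hr (by rw [hc, h, mul_zero]), by rw [hc, sq], fun v => hinj ?_⟩
  rw [hsim, QuadraticMap.map_smul, smul_eq_mul, hc]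

/-- For a diagonalizable anisotropic quadratic form in characteristic 2 on a
space of odd finite dimension, every similitude is a scalar and every multiplier
is a square. -/
theorem similitudes_odd_dim_char_two {K V : Type*} [Field K] [CharP K 2]
    [AddCommGroup V] [Module K V] [FiniteDimensional K V]
    (hodd : Odd (Module.finrank K V))
    (q : QuadraticForm K V)
    (hdiag : ∀ x y : V, QuadraticMap.polar q x y = 0)
    (haniso : QuadraticMap.Anisotropic q)
    (φ : V ≃ₗ[K] V) (r : K) (hr : r ≠ 0)
    (hsim : ∀ v, q (φ v) = r * q v) :
    ∃ c : K, c ≠ 0 ∧ r = c ^ 2 ∧ ∀ v, φ v = c • v :=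
  similitudes_odd_dim_char_two_general hodd q hdiag haniso φ r hr hsim
end

section
/- Let q : V → K be a non-degenerate quadratic form on a vector space of odd finite dimension over a field K with char K ≠ 2. Then every multiplier of a similitude of q is a square in K^×, and GO(q) = K^×·SO(q). -/
/-!
If `φ` has multiplier `s` and `M` is the Gram matrix of the polar form, then `φᵀ M φ = s M`;
taking determinants gives `det φ ^ 2 = s ^ n` with `n` odd. So `c = det φ / s ^ ((n - 1) / 2)`
satisfies `c ^ 2 = s` and `c ^ n = det φ`, and `c⁻¹ • φ` is an isometry of determinant one.
-/

theorem exists_sq_eq_and_pow_eq_of_sq_eq_pow {G : Type*} [CommGroupWithZero G] {s d : G} {n : ℕ}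
    (hn : Odd n) (h : d ^ 2 = s ^ n) : ∃ c, c ^ 2 = s ∧ c ^ n = d := by
  obtain ⟨k, rfl⟩ := hn
  rcases eq_or_ne s 0 with rfl | hs
  · refine ⟨0, zero_pow two_ne_zero, ?_⟩
    rw [zero_pow (by omega), eq_comm, ← pow_eq_zero_iff two_ne_zero, h, zero_pow (by omega)]
  have hsk : s ^ k ≠ 0 := pow_ne_zero _ hs
  have hc : (d / s ^ k) ^ 2 = s := by
    rw [div_pow, h, ← pow_mul, mul_comm k 2, pow_succ, mul_div_cancel_left₀ _ (pow_ne_zero _ hs)]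
  refine ⟨d / s ^ k, hc, ?_⟩
  rw [pow_succ, pow_mul, hc, mul_div_cancel₀ _ hsk]

theorem LinearMap.BilinForm.det_sq_eq_pow_finrank {K V : Type*} [Field K]
    [AddCommGroup V] [Module K V] [FiniteDimensional K V] {B : LinearMap.BilinForm K V}
    (hB : B.Nondegenerate) {f : V →ₗ[K] V} {s : K} (hf : ∀ v w, B (f v) (f w) = s * B v w) :
    LinearMap.det f ^ 2 = s ^ Module.finrank K V := by
  let b := Module.finBasis K V
  have hBf : B.comp f f = s • B := by ext; simp [hf]
  have key := congrArg Matrix.det (LinearMap.BilinForm.toMatrix_comp b b B f f)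
  rw [hBf, map_smul, Matrix.det_smul, Matrix.det_mul, Matrix.det_mul, Matrix.det_transpose,
    LinearMap.det_toMatrix, Fintype.card_fin] at key
  exact mul_right_cancel₀ ((LinearMap.BilinForm.nondegenerate_iff_det_ne_zero b).mp hB)
    (by linear_combination -key)

theorem QuadraticMap.polar_map_of_forall_map_eq_smul {R M N : Type*} [CommRing R] [AddCommGroup M]
    [Module R M] [AddCommGroup N] [Module R N] {Q : QuadraticMap R M N} {f : M →ₗ[R] M} {s : R}
    (hf : ∀ v, Q (f v) = s • Q v) (v w : M) :
    polar Q (f v) (f w) = s • polar Q v w := by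
  simp only [polar, ← map_add, hf, smul_sub]

theorem similitudes_odd_dim_general {K V : Type*} [Field K] [AddCommGroup V] [Module K V]
    [FiniteDimensional K V]
    (hodd : Odd (Module.finrank K V))
    (q : QuadraticForm K V)
    (hnd : ∀ v : V, (∀ w : V, QuadraticMap.polar q v w = 0) → v = 0)
    (φ : V ≃ₗ[K] V) (s : K)
    (hsim : ∀ v, q (φ v) = s * q v) :
    (∃ c : K, s = c ^ 2) ∧
    ∃ c : K, c ≠ 0 ∧ ∃ ψ : V ≃ₗ[K] V,
      (∀ v, q (ψ v) = q v) ∧ LinearMap.det (ψ : V →ₗ[K] V) = 1 ∧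
      ∀ v, φ v = c • ψ v := by
  have hB : q.polarBilin.Nondegenerate :=
    ⟨hnd, fun v hv => hnd v fun w => by rw [QuadraticMap.polar_comm]; exact hv w⟩
  have hdet : LinearMap.det (φ : V →ₗ[K] V) ^ 2 = s ^ Module.finrank K V :=
    LinearMap.BilinForm.det_sq_eq_pow_finrank hB (QuadraticMap.polar_map_of_forall_map_eq_smul hsim)
  obtain ⟨c, hcs, hcd⟩ := exists_sq_eq_and_pow_eq_of_sq_eq_pow hodd hdet
  have hc : c ≠ 0 := by
    rintro rfl
    exact φ.isUnit_det'.ne_zero (by rw [← hcd, zero_pow hodd.pos.ne'])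
  let ψ := φ.trans (LinearEquiv.smulOfNeZero K V c⁻¹ (inv_ne_zero hc))
  have hψ : (ψ : V →ₗ[K] V) = c⁻¹ • (φ : V →ₗ[K] V) := rfl
  refine ⟨⟨c, hcs.symm⟩, c, hc, ψ, fun v => ?_, ?_, fun v => ?_⟩
  · change q (c⁻¹ • φ v) = q v
    rw [QuadraticMap.map_smul, hsim, smul_eq_mul, ← hcs]
    field_simp
  · rw [hψ, LinearMap.det_smul, ← hcd, inv_pow]
    exact inv_mul_cancel₀ (pow_ne_zero _ hc)
  · simp [ψ, smul_smul, hc]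

/-- For a non-degenerate quadratic form on an odd-dimensional space over a field
of characteristic ≠ 2, every multiplier of a similitude is a square, and every
similitude is a scalar multiple of a special orthogonal transformation. -/
theorem similitudes_odd_dim {K V : Type*} [Field K] [AddCommGroup V] [Module K V]
    [FiniteDimensional K V]
    (h2 : (2 : K) ≠ 0)
    (hodd : Odd (Module.finrank K V))
    (q : QuadraticForm K V)
    (hnd : ∀ v : V, (∀ w : V, QuadraticMap.polar q v w = 0) → v = 0)
    (φ : V ≃ₗ[K] V) (s : K) (hs : s ≠ 0)
    (hsim : ∀ v, q (φ v) = s * q v) :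
    (∃ c : K, s = c ^ 2) ∧
    ∃ c : K, c ≠ 0 ∧ ∃ ψ : V ≃ₗ[K] V,
      (∀ v, q (ψ v) = q v) ∧ LinearMap.det (ψ : V →ₗ[K] V) = 1 ∧
      ∀ v, φ v = c • ψ v :=
  similitudes_odd_dim_general hodd q hnd φ s hsim
end

section
/- Let L/K be a purely inseparable quadratic field extension with char K = 2. Then the norm map N : L → K, x ↦ x², is an anisotropic diagonalizable quadratic form on L viewed as a 2-dimensional K-vector space, and its similitude group GO(N) is exactly L^× acting by multiplication. -/
/-!
Since `L² ⊆ K`, squaring `L → K` is well defined; in characteristic 2 it is additive, so it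
is a quadratic form with zero polar, and it is anisotropic since `L` is a field. It is
multiplicative, so multiplication by `a ≠ 0` is a similitude with multiplier `a²`. Conversely,
a similitude `φ` with multiplier `r` satisfies `φ(x)² = r x² = (φ(1) x)²`, and the Frobenius
of `L` is injective, so `φ(x) = φ(1) x`.
-/

namespace PurelyInseparableSq

variable {K L : Type*} [Field K] [Field L] [Algebra K L]
  (hsq : ∀ x : L, ∃ c : K, algebraMap K L c = x ^ 2)

noncomputable def sqMap (x : L) : K := (hsq x).choose

theorem algebraMap_sqMap (x : L) : algebraMap K L (sqMap hsq x) = x ^ 2 :=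
  (hsq x).choose_spec

theorem sqMap_mul (x y : L) : sqMap hsq (x * y) = sqMap hsq x * sqMap hsq y :=
  (algebraMap K L).injective <| by
    rw [map_mul, algebraMap_sqMap, algebraMap_sqMap, algebraMap_sqMap, mul_pow]

theorem sqMap_smul (a : K) (x : L) : sqMap hsq (a • x) = (a * a) • sqMap hsq x :=
  (algebraMap K L).injective <| by
    rw [smul_eq_mul, map_mul, map_mul, algebraMap_sqMap, algebraMap_sqMap, Algebra.smul_def,
      mul_pow, sq]

theorem sqMap_eq_zero_iff {x : L} : sqMap hsq x = 0 ↔ x = 0 := by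
  rw [← (algebraMap K L).injective.eq_iff, algebraMap_sqMap, map_zero,
    pow_eq_zero_iff two_ne_zero]

variable [CharP L 2]

theorem sqMap_add (x y : L) : sqMap hsq (x + y) = sqMap hsq x + sqMap hsq y :=
  (algebraMap K L).injective <| by
    rw [map_add, algebraMap_sqMap, algebraMap_sqMap, algebraMap_sqMap, CharTwo.add_sq]

noncomputable def normForm : QuadraticForm K L where
  toFun := sqMap hsq
  toFun_smul := sqMap_smul hsq
  exists_companion' := ⟨0, fun x y ↦ by simp [sqMap_add]⟩

@[simp]
theorem normForm_apply (x : L) : normForm hsq x = sqMap hsq x := rfl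

theorem polar_normForm (x y : L) : QuadraticMap.polar (normForm hsq) x y = 0 := by
  simp [QuadraticMap.polar, sqMap_add]

theorem normForm_anisotropic : (normForm hsq).Anisotropic := fun _ ↦ (sqMap_eq_zero_iff hsq).mp

theorem eq_mul_of_isSimilitude {φ : L →ₗ[K] L} {r : K}
    (hφ : ∀ x, normForm hsq (φ x) = r * normForm hsq x) (x : L) : φ x = φ 1 * x := by
  have hφ_sq (y : L) : φ y ^ 2 = algebraMap K L r * y ^ 2 := by
    rw [← algebraMap_sqMap hsq, ← normForm_apply, hφ, map_mul, normForm_apply,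
      algebraMap_sqMap]
  apply frobenius_inj L 2
  simp only [frobenius_def, mul_pow, hφ_sq, one_pow, mul_one]

theorem isSimilitude_iff_exists_mul (φ : L ≃ₗ[K] L) :
    (∃ r : K, r ≠ 0 ∧ ∀ x, normForm hsq (φ x) = r * normForm hsq x) ↔
      ∃ a : L, a ≠ 0 ∧ ∀ x, φ x = a * x := by
  constructor
  · rintro ⟨r, -, hφ⟩
    exact ⟨φ 1, φ.map_ne_zero_iff.mpr one_ne_zero,
      eq_mul_of_isSimilitude hsq (φ := φ.toLinearMap) hφ⟩
  · rintro ⟨a, ha, hφ⟩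
    refine ⟨sqMap hsq a, (sqMap_eq_zero_iff hsq).not.mpr ha, fun x ↦ ?_⟩
    rw [hφ, normForm_apply, normForm_apply, sqMap_mul]

end PurelyInseparableSq

open PurelyInseparableSq in
theorem insep_norm_form_GO_general {K L : Type*} [Field K] [Field L] [CharP K 2] [Algebra K L]
    (hinsep : ∀ x : L, ∃ c : K, algebraMap K L c = x ^ 2) :
    ∃ N : QuadraticForm K L,
      (∀ x : L, algebraMap K L (N x) = x ^ 2) ∧
      (∀ x y : L, QuadraticMap.polar N x y = 0) ∧
      QuadraticMap.Anisotropic N ∧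
      (∀ φ : L ≃ₗ[K] L,
        (∃ r : K, r ≠ 0 ∧ ∀ x, N (φ x) = r * N x) ↔
          ∃ a : L, a ≠ 0 ∧ ∀ x, φ x = a * x) := by
  have : CharP L 2 := charP_of_injective_algebraMap (algebraMap K L).injective 2
  exact ⟨normForm hinsep, algebraMap_sqMap hinsep, polar_normForm hinsep,
    normForm_anisotropic hinsep, isSimilitude_iff_exists_mul hinsep⟩

/-- For a purely inseparable quadratic extension L/K in characteristic 2, the norm
x ↦ x² is an anisotropic diagonalizable quadratic form on L over K, and its
similitude group is exactly L^× acting by multiplication. -/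
theorem insep_norm_form_GO {K L : Type*} [Field K] [Field L] [CharP K 2] [Algebra K L]
    (hrank : Module.finrank K L = 2)
    (hinsep : ∀ x : L, ∃ c : K, algebraMap K L c = x ^ 2) :
    ∃ N : QuadraticForm K L,
      (∀ x : L, algebraMap K L (N x) = x ^ 2) ∧
      (∀ x y : L, QuadraticMap.polar N x y = 0) ∧
      QuadraticMap.Anisotropic N ∧
      (∀ φ : L ≃ₗ[K] L,
        (∃ r : K, r ≠ 0 ∧ ∀ x, N (φ x) = r * N x) ↔
          ∃ a : L, a ≠ 0 ∧ ∀ x, φ x = a * x) :=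
  insep_norm_form_GO_general hinsep
end

section
/- Let V and Z be vector spaces over a field K, β : V × V → Z an alternating bilinear map defining a reduced Heisenberg algebra h(V,Z,β) (with bracket [(v,x),(w,y)] = (0, β(v,w))), and A an abelian Lie algebra over K. Then the automorphisms of the Lie algebra h(V,Z,β) × A are precisely the maps (v,z,a) ↦ (σ(v), σ'(z) + τ(v) + ζ(a), α(a) + ξ(v)) where σ is a linear bijection of V with β(σ(u),σ(v)) = σ'(β(u,v)) for some σ' ∈ GL(Z), τ ∈ Hom(V,Z), ζ ∈ Hom(A,Z), α ∈ GL(A), ξ ∈ Hom(V,A). -/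
variable {K V Z A : Type*} [Field K] [AddCommGroup V] [Module K V]
  [AddCommGroup Z] [Module K Z] [AddCommGroup A] [Module K A]

/-- The Lie ring structure of the generalized Heisenberg algebra h(V,Z,β) times an
abelian Lie algebra A: the bracket is [(v,x,a),(w,y,b)] = (0, β(v,w), 0). -/
def heisLieRing (β : V →ₗ[K] V →ₗ[K] Z) (halt : ∀ v : V, β v v = 0) :
    LieRing (V × Z × A) :=
  { (inferInstance : AddCommGroup (V × Z × A)) with
    bracket := fun p q => (0, β p.1 q.1, 0)
    add_lie := by
      intro x y z
      show ((0 : V), β (x.1 + y.1) z.1, (0 : A))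
        = ((0 : V), β x.1 z.1, (0 : A)) + ((0 : V), β y.1 z.1, (0 : A))
      simp [Prod.ext_iff]
    lie_add := by
      intro x y z
      show ((0 : V), β x.1 (y.1 + z.1), (0 : A))
        = ((0 : V), β x.1 y.1, (0 : A)) + ((0 : V), β x.1 z.1, (0 : A))
      simp [Prod.ext_iff]
    lie_self := by
      intro x
      show ((0 : V), β x.1 x.1, (0 : A)) = 0
      simp [halt, Prod.ext_iff]
    leibniz_lie := by
      intro x y z
      show ((0 : V), β x.1 (0 : V), (0 : A))
        = ((0 : V), β (0 : V) z.1, (0 : A)) + ((0 : V), β y.1 (0 : V), (0 : A))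
      simp [Prod.ext_iff] }

/-- The K-Lie algebra structure on h(V,Z,β) × A. -/
def heisLieAlgebra (β : V →ₗ[K] V →ₗ[K] Z) (halt : ∀ v : V, β v v = 0) :
    letI := heisLieRing (A := A) β halt
    LieAlgebra K (V × Z × A) :=
  letI := heisLieRing (A := A) β halt
  { (inferInstance : Module K (V × Z × A)) with
    lie_smul := by
      intro t x y
      show ((0 : V), β x.1 (t • y.1), (0 : A)) = t • ((0 : V), β x.1 y.1, (0 : A))
      simp [Prod.ext_iff] }

/-!
An automorphism of h(V,Z,β) × A preserves its center {0} × Z × A and its derived algebra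
{0} × Z × {0}, so as a 3 × 3 block matrix with respect to V × Z × A its blocks Z → V, A → V and
Z → A vanish. The inverse has the same shape, so the three diagonal blocks σ, σ', α are invertible,
and comparing Z-components of f ⁅(u,0,0),(w,0,0)⁆ = ⁅f (u,0,0), f (w,0,0)⁆ gives σ' ∘ β = β ∘ (σ × σ).
-/

namespace HeisenbergProd

section Blocks

-- `blockXY f : Y →ₗ[K] X` is the `(X, Y)` entry of `f` as a block matrix on `V × Z × A`.
variable (f : (V × Z × A) →ₗ[K] (V × Z × A))

def blockVV : V →ₗ[K] V := LinearMap.fst K V (Z × A) ∘ₗ f ∘ₗ LinearMap.inl K V (Z × A)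

def blockZV : V →ₗ[K] Z :=
  LinearMap.fst K Z A ∘ₗ LinearMap.snd K V (Z × A) ∘ₗ f ∘ₗ LinearMap.inl K V (Z × A)

def blockAV : V →ₗ[K] A :=
  LinearMap.snd K Z A ∘ₗ LinearMap.snd K V (Z × A) ∘ₗ f ∘ₗ LinearMap.inl K V (Z × A)

def blockZZ : Z →ₗ[K] Z :=
  LinearMap.fst K Z A ∘ₗ LinearMap.snd K V (Z × A) ∘ₗ f ∘ₗ
    LinearMap.inr K V (Z × A) ∘ₗ LinearMap.inl K Z A

def blockAZ : Z →ₗ[K] A :=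
  LinearMap.snd K Z A ∘ₗ LinearMap.snd K V (Z × A) ∘ₗ f ∘ₗ
    LinearMap.inr K V (Z × A) ∘ₗ LinearMap.inl K Z A

def blockZA : A →ₗ[K] Z :=
  LinearMap.fst K Z A ∘ₗ LinearMap.snd K V (Z × A) ∘ₗ f ∘ₗ
    LinearMap.inr K V (Z × A) ∘ₗ LinearMap.inr K Z A

def blockAA : A →ₗ[K] A :=
  LinearMap.snd K Z A ∘ₗ LinearMap.snd K V (Z × A) ∘ₗ f ∘ₗ
    LinearMap.inr K V (Z × A) ∘ₗ LinearMap.inr K Z A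

lemma blockVV_apply (v : V) : blockVV f v = (f (v, 0, 0)).1 := rfl
lemma blockZV_apply (v : V) : blockZV f v = (f (v, 0, 0)).2.1 := rfl
lemma blockAV_apply (v : V) : blockAV f v = (f (v, 0, 0)).2.2 := rfl
lemma blockZZ_apply (z : Z) : blockZZ f z = (f (0, z, 0)).2.1 := rfl
lemma blockZA_apply (a : A) : blockZA f a = (f (0, 0, a)).2.1 := rfl
lemma blockAA_apply (a : A) : blockAA f a = (f (0, 0, a)).2.2 := rfl

end Blocks

structure PreservesCenterAndDerived (f : (V × Z × A) →ₗ[K] (V × Z × A)) : Prop where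
  center : ∀ z a, (f (0, z, a)).1 = 0
  derived : ∀ z, (f (0, z, 0)).2.2 = 0

section Triangular

variable {f g : (V × Z × A) →ₗ[K] (V × Z × A)}

lemma PreservesCenterAndDerived.apply_eq (hf : PreservesCenterAndDerived f) (v : V) (z : Z)
    (a : A) :
    f (v, z, a) = (blockVV f v, blockZZ f z + blockZV f v + blockZA f a,
      blockAA f a + blockAV f v) := by
  have hsplit : ((v, z, a) : V × Z × A) = (v, 0, 0) + (0, z, 0) + (0, 0, a) := by simp
  rw [hsplit, map_add, map_add]
  ext <;> simp [blockVV_apply, blockZZ_apply, blockZV_apply, blockZA_apply, blockAA_apply,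
    blockAV_apply, hf.center z 0, hf.center 0 a, hf.derived z] <;> abel

lemma PreservesCenterAndDerived.fst_apply (hf : PreservesCenterAndDerived f)
    (p : V × Z × A) : (f p).1 = blockVV f p.1 := by
  obtain ⟨v, z, a⟩ := p
  rw [hf.apply_eq]

lemma PreservesCenterAndDerived.apply_zero_zero (hf : PreservesCenterAndDerived f) (z : Z) :
    f (0, z, 0) = (0, blockZZ f z, 0) := by
  rw [hf.apply_eq]
  simp

lemma PreservesCenterAndDerived.snd_snd_apply (hf : PreservesCenterAndDerived f)
    {p : V × Z × A} (hp : p.1 = 0) : (f p).2.2 = blockAA f p.2.2 := by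
  obtain ⟨v, z, a⟩ := p
  obtain rfl : v = 0 := hp
  rw [hf.apply_eq]
  simp

lemma PreservesCenterAndDerived.blockVV_comp (hg : PreservesCenterAndDerived g) :
    blockVV (g ∘ₗ f) = blockVV g ∘ₗ blockVV f :=
  LinearMap.ext fun v => hg.fst_apply (f (v, 0, 0))

lemma PreservesCenterAndDerived.blockZZ_comp (hf : PreservesCenterAndDerived f) :
    blockZZ (g ∘ₗ f) = blockZZ g ∘ₗ blockZZ f :=
  LinearMap.ext fun z => congrArg (fun p => (g p).2.1) (hf.apply_zero_zero z)

lemma PreservesCenterAndDerived.blockAA_comp (hf : PreservesCenterAndDerived f)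
    (hg : PreservesCenterAndDerived g) :
    blockAA (g ∘ₗ f) = blockAA g ∘ₗ blockAA f :=
  LinearMap.ext fun a => hg.snd_snd_apply (hf.center 0 a)

end Triangular

lemma blockVV_id :
    blockVV (LinearMap.id : (V × Z × A) →ₗ[K] (V × Z × A)) = LinearMap.id := rfl
lemma blockZZ_id :
    blockZZ (LinearMap.id : (V × Z × A) →ₗ[K] (V × Z × A)) = LinearMap.id := rfl
lemma blockAA_id :
    blockAA (LinearMap.id : (V × Z × A) →ₗ[K] (V × Z × A)) = LinearMap.id := rfl

section Equivs

variable (f : (V × Z × A) ≃ₗ[K] (V × Z × A))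
  (hf : PreservesCenterAndDerived f.toLinearMap) (hf' : PreservesCenterAndDerived f.symm.toLinearMap)

def blockVVEquiv : V ≃ₗ[K] V :=
  .ofLinearMap (blockVV f.toLinearMap) (blockVV f.symm.toLinearMap)
    (by rw [← hf.blockVV_comp, f.comp_symm, blockVV_id])
    (by rw [← hf'.blockVV_comp, f.symm_comp, blockVV_id])

def blockZZEquiv : Z ≃ₗ[K] Z :=
  .ofLinearMap (blockZZ f.toLinearMap) (blockZZ f.symm.toLinearMap)
    (by rw [← hf'.blockZZ_comp, f.comp_symm, blockZZ_id])
    (by rw [← hf.blockZZ_comp, f.symm_comp, blockZZ_id])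

def blockAAEquiv : A ≃ₗ[K] A :=
  .ofLinearMap (blockAA f.toLinearMap) (blockAA f.symm.toLinearMap)
    (by rw [← hf'.blockAA_comp hf, f.comp_symm, blockAA_id])
    (by rw [← hf.blockAA_comp hf', f.symm_comp, blockAA_id])

end Equivs

section Bracket

variable {β : V →ₗ[K] V →ₗ[K] Z}

/-- `f ⁅p, q⁆ = ⁅f p, f q⁆` for the bracket of `heisLieRing β halt`, unfolded. -/
def PreservesHeisBracket (β : V →ₗ[K] V →ₗ[K] Z) (f : V × Z × A → V × Z × A) : Prop :=
  ∀ p q : V × Z × A, f (0, β p.1 q.1, 0) = (0, β (f p).1 (f q).1, 0)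

lemma PreservesHeisBracket.symm {f : (V × Z × A) ≃ₗ[K] (V × Z × A)}
    (hf : PreservesHeisBracket β f) : PreservesHeisBracket β f.symm := by
  intro p q
  apply f.injective
  rw [f.apply_symm_apply, hf (f.symm p) (f.symm q)]
  simp

lemma PreservesHeisBracket.fst_apply_zero {f : (V × Z × A) ≃ₗ[K] (V × Z × A)}
    (hred : ∀ v : V, (∀ w : V, β v w = 0) → v = 0) (hf : PreservesHeisBracket β f)
    (z : Z) (a : A) : (f (0, z, a)).1 = 0 := by
  refine hred _ fun w => ?_
  have h := hf (0, z, a) (f.symm (w, 0, 0))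
  simp only [map_zero, LinearMap.zero_apply, Prod.mk_zero_zero, f.apply_symm_apply] at h
  exact (congrArg (·.2.1) h).symm

lemma PreservesHeisBracket.blockAZ_eq_zero {f : (V × Z × A) →ₗ[K] (V × Z × A)}
    (hspan : Submodule.span K {z : Z | ∃ u w : V, β u w = z} = ⊤)
    (hf : PreservesHeisBracket β f) : blockAZ f = 0 := by
  refine LinearMap.ext_on hspan ?_
  rintro _ ⟨u, w, rfl⟩
  exact congrArg (·.2.2) (hf (u, 0, 0) (w, 0, 0))

lemma PreservesHeisBracket.preservesCenterAndDerived {f : (V × Z × A) ≃ₗ[K] (V × Z × A)}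
    (hspan : Submodule.span K {z : Z | ∃ u w : V, β u w = z} = ⊤)
    (hred : ∀ v : V, (∀ w : V, β v w = 0) → v = 0) (hf : PreservesHeisBracket β f) :
    PreservesCenterAndDerived f.toLinearMap where
  center := hf.fst_apply_zero hred
  derived := LinearMap.congr_fun (blockAZ_eq_zero (f := f.toLinearMap) hspan hf)

lemma PreservesHeisBracket.blockZZ_apply_bilin {f : (V × Z × A) →ₗ[K] (V × Z × A)}
    (hf : PreservesHeisBracket β f) (u w : V) :
    blockZZ f (β u w) = β (blockVV f u) (blockVV f w) :=
  congrArg (·.2.1) (hf (u, 0, 0) (w, 0, 0))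

lemma preservesHeisBracket_of_apply_eq {f : (V × Z × A) → (V × Z × A)} {σ : V →ₗ[K] V}
    {σ' : Z →ₗ[K] Z} {τ : V →ₗ[K] Z} {ζ : A →ₗ[K] Z} {α : A →ₗ[K] A} {ξ : V →ₗ[K] A}
    (hσ : ∀ u w : V, σ' (β u w) = β (σ u) (σ w))
    (hf : ∀ v z a, f (v, z, a) = (σ v, σ' z + τ v + ζ a, α a + ξ v)) :
    PreservesHeisBracket β f := by
  rintro ⟨u, -, -⟩ ⟨w, -, -⟩
  simp [hf, hσ]

lemma exists_equivs_of_preservesHeisBracket {f : (V × Z × A) ≃ₗ[K] (V × Z × A)}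
    (hspan : Submodule.span K {z : Z | ∃ u w : V, β u w = z} = ⊤)
    (hred : ∀ v : V, (∀ w : V, β v w = 0) → v = 0) (hf : PreservesHeisBracket β f) :
    ∃ (σ : V ≃ₗ[K] V) (σ' : Z ≃ₗ[K] Z) (τ : V →ₗ[K] Z) (ζ : A →ₗ[K] Z)
      (α : A ≃ₗ[K] A) (ξ : V →ₗ[K] A),
      (∀ u w : V, σ' (β u w) = β (σ u) (σ w)) ∧
      ∀ (v : V) (z : Z) (a : A), f (v, z, a) = (σ v, σ' z + τ v + ζ a, α a + ξ v) := by
  have hfd := hf.preservesCenterAndDerived hspan hred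
  have hfd' := hf.symm.preservesCenterAndDerived hspan hred
  exact ⟨blockVVEquiv f hfd hfd', blockZZEquiv f hfd hfd', blockZV f.toLinearMap,
    blockZA f.toLinearMap, blockAAEquiv f hfd hfd', blockAV f.toLinearMap,
    PreservesHeisBracket.blockZZ_apply_bilin (f := f.toLinearMap) hf, hfd.apply_eq⟩

end Bracket

end HeisenbergProd

/-- Automorphisms of the Lie algebra h(V,Z,β) × A, for a reduced Heisenberg
algebra h(V,Z,β) and an abelian Lie algebra A, are precisely the maps
(v,z,a) ↦ (σ v, σ' z + τ v + ζ a, α a + ξ v). -/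
theorem heisenberg_automorphisms (β : V →ₗ[K] V →ₗ[K] Z) (halt : ∀ v : V, β v v = 0)
    (hspan : Submodule.span K {z : Z | ∃ u w : V, β u w = z} = ⊤)
    (hred : ∀ v : V, (∀ w : V, β v w = 0) → v = 0)
    (f : (V × Z × A) ≃ₗ[K] (V × Z × A)) :
    letI := heisLieRing (A := A) β halt
    ((∀ p q : V × Z × A, f ⁅p, q⁆ = ⁅f p, f q⁆) ↔
      ∃ (σ : V ≃ₗ[K] V) (σ' : Z ≃ₗ[K] Z) (τ : V →ₗ[K] Z) (ζ : A →ₗ[K] Z)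
        (α : A ≃ₗ[K] A) (ξ : V →ₗ[K] A),
        (∀ u w : V, σ' (β u w) = β (σ u) (σ w)) ∧
        ∀ (v : V) (z : Z) (a : A), f (v, z, a) = (σ v, σ' z + τ v + ζ a, α a + ξ v)) := by
  exact ⟨HeisenbergProd.exists_equivs_of_preservesHeisBracket hspan hred,
    fun ⟨σ, σ', τ, ζ, α, ξ, hσ, hf⟩ => HeisenbergProd.preservesHeisBracket_of_apply_eq
      (σ := σ.toLinearMap) (σ' := σ'.toLinearMap) (α := α.toLinearMap) hσ hf⟩
end
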